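/- Let H be a real Hilbert space, let p : H → ℝ be a continuous seminorm on H with p(u) ≤ ‖u‖ for all u ∈ H, let (ψ_j)_{j∈ℕ} be a Hilbert (orthonormal) basis of H, let λ : ℕ → ℝ, let T > 0 and set r = 1/T with J = {j : λ_j ≤ r} finite. Let S : [0,T] → (H →L H) be a family of bounded linear operators, and let C, C₁, C₃, ζ > 0 be constants. Assume: (i) growth bound: ‖S_T u‖² ≤ C e^{C₃ T} ‖u‖² for all u ∈ H; (ii) spectral observability: for every finitely supported family (c_j)_{j∈J}, Σ_{j∈J}|c_j|² ≤ C e^{C₁ √r} · p(Σ_{j∈J} c_j ψ_j)²; (iii) left-inverse property: ζ · p(u) ≤ p(S_t u) for all t ∈ [0,T] and u ∈ H. Then for every φ₀ in the linear span of {ψ_j : j ∈ J} such that t ↦ p(S_t φ₀)² is integrable on [0,T], one has ‖S_T φ₀‖² ≤ (C² / (ζ² T)) · e^{C₃ T + C₁/√T} · ∫₀ᵀ p(S_t φ₀)² dt. -/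
import Mathlib


open MeasureTheory intervalIntegral
open scoped BigOperators

/-- Let `H` be a real Hilbert space, `p` a continuous seminorm on
`H` with `p u ≤ ‖u‖`, `ψ` a Hilbert (orthonormal) basis of `H`, `lam : ℕ → ℝ`,
`T > 0`, `r = 1/T` and `J = {j | lam j ≤ r}` finite. Let `S` be a family of
bounded linear operators and `C, C₁, C₃, ζ > 0`. Assume:
(i) growth bound `‖S T u‖² ≤ C e^{C₃ T} ‖u‖²`;
(ii) spectral observability `∑_{j ∈ J} |c j|² ≤ C e^{C₁ √r} p (∑ c j • ψ j)²`;
(iii) left-inverse property `ζ * p u ≤ p (S t u)` for `t ∈ [0,T]`.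
Then for every `φ₀` in the span of `{ψ j : j ∈ J}` with `t ↦ p (S t φ₀)²`
integrable on `[0,T]`:
`‖S T φ₀‖² ≤ (C²/(ζ² T)) e^{C₃ T + C₁/√T} ∫₀ᵀ p (S t φ₀)² dt`. -/
theorem stmt_8 {H : Type*} [NormedAddCommGroup H] [InnerProductSpace ℝ H]
    [CompleteSpace H] (p : Seminorm ℝ H) (hp : Continuous p)
    (hp1 : ∀ u : H, p u ≤ ‖u‖)
    (ψ : HilbertBasis ℕ ℝ H) (lam : ℕ → ℝ)
    (T : ℝ) (hT : 0 < T) (r : ℝ) (hr : r = 1 / T)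
    (hJ : Set.Finite {j : ℕ | lam j ≤ r})
    (S : ℝ → H →L[ℝ] H) (C C₁ C₃ ζ : ℝ)
    (hC : 0 < C) (hC₁ : 0 < C₁) (hC₃ : 0 < C₃) (hζ : 0 < ζ)
    (hgrowth : ∀ u : H, ‖S T u‖ ^ 2 ≤ C * Real.exp (C₃ * T) * ‖u‖ ^ 2)
    (hspec : ∀ c : ℕ → ℝ,
      ∑ j ∈ hJ.toFinset, |c j| ^ 2 ≤
        C * Real.exp (C₁ * Real.sqrt r) *
          p (∑ j ∈ hJ.toFinset, c j • ψ j) ^ 2)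
    (hinv : ∀ t ∈ Set.Icc (0 : ℝ) T, ∀ u : H, ζ * p u ≤ p (S t u)) :
    ∀ φ₀ ∈ Submodule.span ℝ (ψ '' {j : ℕ | lam j ≤ r}),
      IntervalIntegrable (fun t => p (S t φ₀) ^ 2) volume 0 T →
        ‖S T φ₀‖ ^ 2 ≤
          (C ^ 2 / (ζ ^ 2 * T)) * Real.exp (C₃ * T + C₁ / Real.sqrt T) *
            ∫ t in (0 : ℝ)..T, p (S t φ₀) ^ 2 := by
  intro φ₀ hφ₀ hint
  rw [Finsupp.mem_span_image_iff_linearCombination] at hφ₀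
  obtain ⟨l, hl, hlsum⟩ := hφ₀
  set c : ℕ → ℝ := fun j => l j with hc
  have hsupp : l.support ⊆ hJ.toFinset := by
    intro j hj
    simp only [Set.Finite.mem_toFinset]
    exact hl hj
  have hsum : ∑ j ∈ hJ.toFinset, c j • ψ j = φ₀ := by
    rw [← hlsum, Finsupp.linearCombination_apply]
    exact (Finsupp.sum_of_support_subset l hsupp (fun i a => a • (ψ i : H)) (fun i _ => zero_smul ℝ _)).symm
  -- norm of φ₀
  have hnorm : ‖φ₀‖ ^ 2 = ∑ j ∈ hJ.toFinset, |c j| ^ 2 := by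
    rw [← real_inner_self_eq_norm_sq, ← hsum, ψ.orthonormal.inner_sum]
    simp [sq_abs, sq]
  -- spectral estimate
  have hspec' : ‖φ₀‖ ^ 2 ≤ C * Real.exp (C₁ * Real.sqrt r) * p φ₀ ^ 2 := by
    rw [hnorm]
    calc ∑ j ∈ hJ.toFinset, |c j| ^ 2
        ≤ C * Real.exp (C₁ * Real.sqrt r) * p (∑ j ∈ hJ.toFinset, c j • ψ j) ^ 2 :=
          hspec c
      _ = C * Real.exp (C₁ * Real.sqrt r) * p φ₀ ^ 2 := by rw [hsum]
  -- integral lower bound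
  have hpt : ∀ t ∈ Set.Icc (0 : ℝ) T, ζ ^ 2 * p φ₀ ^ 2 ≤ p (S t φ₀) ^ 2 := by
    intro t ht
    have h1 := hinv t ht φ₀
    have h2 : 0 ≤ ζ * p φ₀ := mul_nonneg hζ.le (apply_nonneg p φ₀)
    nlinarith [apply_nonneg p (S t φ₀)]
  have hintlb : ζ ^ 2 * p φ₀ ^ 2 * T ≤ ∫ t in (0:ℝ)..T, p (S t φ₀) ^ 2 := by
    have := intervalIntegral.integral_mono_on hT.le
      (_root_.intervalIntegrable_const (c := ζ ^ 2 * p φ₀ ^ 2)) hint hpt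
    rwa [intervalIntegral.integral_const, smul_eq_mul, sub_zero, mul_comm] at this
  -- sqrt r = 1 / sqrt T
  have hsqrt : Real.sqrt r = 1 / Real.sqrt T := by
    rw [hr, one_div, one_div, Real.sqrt_inv]
  have hTpos : (0:ℝ) < ζ ^ 2 * T := by positivity
  -- final chain
  have hmain : ‖S T φ₀‖ ^ 2 ≤ C ^ 2 * Real.exp (C₃ * T) * Real.exp (C₁ * Real.sqrt r) * p φ₀ ^ 2 := by
    calc ‖S T φ₀‖ ^ 2 ≤ C * Real.exp (C₃ * T) * ‖φ₀‖ ^ 2 := hgrowth φ₀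
      _ ≤ C * Real.exp (C₃ * T) * (C * Real.exp (C₁ * Real.sqrt r) * p φ₀ ^ 2) := by
          apply mul_le_mul_of_nonneg_left hspec' (by positivity)
      _ = C ^ 2 * Real.exp (C₃ * T) * Real.exp (C₁ * Real.sqrt r) * p φ₀ ^ 2 := by ring
  have hexp : Real.exp (C₃ * T + C₁ / Real.sqrt T)
      = Real.exp (C₃ * T) * Real.exp (C₁ * Real.sqrt r) := by
    rw [← Real.exp_add, hsqrt]
    ring_nf
  rw [hexp]
  have hpφ : p φ₀ ^ 2 ≤ (1 / (ζ ^ 2 * T)) * ∫ t in (0:ℝ)..T, p (S t φ₀) ^ 2 := by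
    rw [one_div, inv_mul_eq_div, le_div_iff₀ hTpos]
    linarith [hintlb]
  calc ‖S T φ₀‖ ^ 2
      ≤ C ^ 2 * Real.exp (C₃ * T) * Real.exp (C₁ * Real.sqrt r) * p φ₀ ^ 2 := hmain
    _ ≤ C ^ 2 * Real.exp (C₃ * T) * Real.exp (C₁ * Real.sqrt r) *
        ((1 / (ζ ^ 2 * T)) * ∫ t in (0:ℝ)..T, p (S t φ₀) ^ 2) := by
        apply mul_le_mul_of_nonneg_left hpφ (by positivity)
    _ = C ^ 2 / (ζ ^ 2 * T) * (Real.exp (C₃ * T) * Real.exp (C₁ * Real.sqrt r)) *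
        ∫ t in (0:ℝ)..T, p (S t φ₀) ^ 2 := by ring
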